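/- arXiv:1601.04157 — 2 statements merged into one kernel-verified Lean document; each statement's English description precedes it below -/
import Mathlib

section
/- Let I : ℝ^d → ℝ be twice continuously differentiable with ‖∇²I(z)‖ ≤ M for all z ∈ ℝ^d, and let δ, L > 0 with M, δ, L > 0. Let x, y ∈ ℝ^d with δ ≤ |∇I(y)| ≤ L. If λ ∈ ℝ satisfies I(y + λ∇I(y)) = I(x) and |λ| ≤ δ²/(ML²), then |λ| ≤ (2/δ²)·|I(y) − I(x)|. (A priori bound on the projection parameter λ in the projection step.) -/
/-!
The Hessian bound makes `∇I` `M`-Lipschitz, so the first-order Taylor expansion of `I` at `y` in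
the direction `λ∇I(y)` gives `|I(x) - I(y) - λ|∇I(y)|²| ≤ (M/2) λ² |∇I(y)|²`. The smallness of `λ`
bounds this quadratic error by `|λ|δ²/2`, at most half of the linear term `|λ||∇I(y)|² ≥ |λ|δ²`,
so `|I(y) - I(x)| ≥ |λ|δ²/2`.
-/

open scoped RealInnerProductSpace

open Set InnerProductSpace

section Taylor

variable {E F : Type*} [NormedAddCommGroup E] [NormedSpace ℝ E]
  [NormedAddCommGroup F] [NormedSpace ℝ F]

theorem norm_add_sub_sub_fderiv_apply_le {f : E → F} {f' : E → E →L[ℝ] F} {M : ℝ}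
    (hf : ∀ x, HasFDerivAt f (f' x) x) (hf' : ∀ a b, ‖f' a - f' b‖ ≤ M * ‖a - b‖) (y v : E) :
    ‖f (y + v) - f y - f' y v‖ ≤ M / 2 * ‖v‖ ^ 2 := by
  set φ : ℝ → F := fun t => f (y + t • v) - f y - t • f' y v
  have hφ : ∀ t, HasDerivAt φ (f' (y + t • v) v - f' y v) t := by
    intro t
    have hline : HasDerivAt (fun t : ℝ => y + t • v) v t := by
      simpa using ((hasDerivAt_id t).smul_const v).const_add y
    exact (((hf _).comp_hasDerivAt t hline).sub_const (f y)).sub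
      (by simpa using (hasDerivAt_id t).smul_const (f' y v))
  have hB : ∀ t, HasDerivAt (fun t => M / 2 * ‖v‖ ^ 2 * t ^ 2) (M * ‖v‖ ^ 2 * t) t := by
    intro t
    exact ((hasDerivAt_pow 2 t).const_mul _).congr_deriv (by norm_num; ring)
  have bound : ∀ t ∈ Ico (0 : ℝ) 1, ‖f' (y + t • v) v - f' y v‖ ≤ M * ‖v‖ ^ 2 * t := by
    rintro t ⟨ht, -⟩
    calc ‖f' (y + t • v) v - f' y v‖ = ‖(f' (y + t • v) - f' y) v‖ := rfl
      _ ≤ ‖f' (y + t • v) - f' y‖ * ‖v‖ := ContinuousLinearMap.le_opNorm _ _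
      _ ≤ M * ‖t • v‖ * ‖v‖ := by
        gcongr
        simpa using hf' (y + t • v) y
      _ = M * ‖v‖ ^ 2 * t := by rw [norm_smul, Real.norm_of_nonneg ht]; ring
  have := image_norm_le_of_norm_deriv_right_le_deriv_boundary
    (fun t _ => (hφ t).continuousAt.continuousWithinAt) (fun t _ => (hφ t).hasDerivWithinAt)
    (by simp [φ]) hB bound (right_mem_Icc.2 zero_le_one)
  simpa [φ] using this

end Taylor

section Gradient

variable {E : Type*} [NormedAddCommGroup E] [InnerProductSpace ℝ E] [CompleteSpace E]

theorem norm_fderiv_sub_fderiv_eq_norm_gradient_sub (f : E → ℝ) (a b : E) :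
    ‖fderiv ℝ f a - fderiv ℝ f b‖ = ‖gradient f a - gradient f b‖ := by
  rw [gradient, gradient, ← map_sub, LinearIsometryEquiv.norm_map]

theorem norm_gradient_sub_le_of_norm_fderiv_gradient_le {f : E → ℝ} {M : ℝ} (hf : ContDiff ℝ 2 f)
    (hHess : ∀ z, ‖fderiv ℝ (gradient f) z‖ ≤ M) (a b : E) :
    ‖gradient f a - gradient f b‖ ≤ M * ‖a - b‖ := by
  have hgrad : Differentiable ℝ (gradient f) :=
    (toDual ℝ E).symm.toContinuousLinearEquiv.differentiable.comp
      ((hf.fderiv_right (m := 1) le_rfl).differentiable one_ne_zero)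
  exact Convex.norm_image_sub_le_of_norm_fderiv_le (fun z _ => hgrad z) (fun z _ => hHess z)
    convex_univ (mem_univ b) (mem_univ a)

theorem abs_add_sub_sub_inner_gradient_le {f : E → ℝ} {M : ℝ} (hf : Differentiable ℝ f)
    (hgrad : ∀ a b, ‖gradient f a - gradient f b‖ ≤ M * ‖a - b‖) (y v : E) :
    |f (y + v) - f y - ⟪gradient f y, v⟫| ≤ M / 2 * ‖v‖ ^ 2 := by
  have := norm_add_sub_sub_fderiv_apply_le (fun x => (hf x).hasFDerivAt)
    (fun a b => (norm_fderiv_sub_fderiv_eq_norm_gradient_sub f a b).trans_le (hgrad a b)) y v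
  rwa [← toDual_symm_apply, ← gradient, Real.norm_eq_abs] at this

end Gradient

theorem abs_le_two_div_sq_mul_abs_of_abs_sub_mul_le {c s M δ lam : ℝ} (hδ : 0 < δ)
    (hs : δ ^ 2 ≤ s) (hquad : M * lam ^ 2 * s ≤ |lam| * δ ^ 2)
    (h : |c - lam * s| ≤ M / 2 * lam ^ 2 * s) : |lam| ≤ 2 / δ ^ 2 * |c| := by
  have hlin : |lam| * s - |c| ≤ |c - lam * s| := by
    have := abs_sub_abs_le_abs_sub (lam * s) c
    rw [abs_mul, abs_of_nonneg ((sq_nonneg δ).trans hs), abs_sub_comm] at this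
    exact this
  have : |lam| * δ ^ 2 ≤ |lam| * s := mul_le_mul_of_nonneg_left hs (abs_nonneg lam)
  rw [div_mul_eq_mul_div, le_div_iff₀ (by positivity)]
  linarith

/-- A priori bound on the projection parameter: if `I` is `C²` with Hessian bounded by `M`,
`δ ≤ |∇I(y)| ≤ L`, and `λ` satisfies `I(y + λ∇I(y)) = I(x)` with `|λ| ≤ δ²/(ML²)`,
then `|λ| ≤ (2/δ²)|I(y) − I(x)|`. -/
theorem projection_step_lambda_bound (d : ℕ) (I : EuclideanSpace ℝ (Fin d) → ℝ)
    (hI : ContDiff ℝ 2 I) (M δ L : ℝ) (hM : 0 < M) (hδ : 0 < δ) (hL : 0 < L)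
    (hHess : ∀ z : EuclideanSpace ℝ (Fin d), ‖fderiv ℝ (fun w => gradient I w) z‖ ≤ M)
    (x y : EuclideanSpace ℝ (Fin d))
    (hylb : δ ≤ ‖gradient I y‖) (hyub : ‖gradient I y‖ ≤ L)
    (lam : ℝ) (hproj : I (y + lam • gradient I y) = I x)
    (hsmall : |lam| ≤ δ ^ 2 / (M * L ^ 2)) :
    |lam| ≤ (2 / δ ^ 2) * |I y - I x| := by
  set g := gradient I y
  have htaylor : |I x - I y - lam * ‖g‖ ^ 2| ≤ M / 2 * lam ^ 2 * ‖g‖ ^ 2 := by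
    have := abs_add_sub_sub_inner_gradient_le (hI.differentiable two_ne_zero)
      (norm_gradient_sub_le_of_norm_fderiv_gradient_le hI hHess) y (lam • g)
    rwa [hproj, real_inner_smul_right, real_inner_self_eq_norm_sq, norm_smul, mul_pow,
      Real.norm_eq_abs, sq_abs, ← mul_assoc] at this
  have hquad : M * lam ^ 2 * ‖g‖ ^ 2 ≤ |lam| * δ ^ 2 := by
    have hlam : |lam| * (M * L ^ 2) ≤ δ ^ 2 := (le_div_iff₀ (by positivity)).1 hsmall
    calc M * lam ^ 2 * ‖g‖ ^ 2 ≤ M * lam ^ 2 * L ^ 2 := by gcongr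
      _ = |lam| * (|lam| * (M * L ^ 2)) := by rw [← sq_abs lam]; ring
      _ ≤ |lam| * δ ^ 2 := by gcongr
  rw [abs_sub_comm]
  exact abs_le_two_div_sq_mul_abs_of_abs_sub_mul_le hδ (by gcongr) hquad htaylor
end

section
/- Let δ, L, M > 0. There exists a constant C, depending only on δ, L and M, with the following property: for every probability space (Ω, F, P), every x ∈ ℝ^d, all square-integrable random vectors X, X̂ : Ω → ℝ^d with I(X) = I(x) almost surely, every I : ℝ^d → ℝ twice continuously differentiable with δ ≤ |∇I(z)| ≤ L and ‖∇²I(z)‖ ≤ M for all z, and every random variable λ : Ω → ℝ satisfying I(X̂ + λ∇I(X̂)) = I(x) almost surely and |λ| ≤ δ²/(ML²) almost surely, one has |E[λ]| ≤ C·( |E[X̂ − X]| + E[|X̂ − X|²] + (E[|X − x|²])^{1/2}·(E[|X̂ − X|²])^{1/2} ). -/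
/-!
Write `h = X - X̂` and `u = ∇I(X̂)`. Second-order Taylor expansion of `I` at `X̂` in the
directions `λu` and `h`, together with `I(X̂ + λu) = I(x) = I(X)`, gives
`|λ|u|² - ⟪u, h⟫| ≤ (M/2)(λ²|u|² + |h|²)`. The a priori bound on `|λ|` absorbs the `λ²` term, so
`|λ| = O(|h|)` and hence `λ = ⟪u, h⟫/|u|² + O(|h|²)`. Replacing `u` by `∇I(x)` costs
`O(|X̂ - x| |h|)`, because `v ↦ v/|v|²` (inversion in the unit sphere) is `1/δ²`-Lipschitz on
`{|v| ≥ δ}`. Taking expectations, the linear term contributes at most `|E[X̂ - X]|/δ`, and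
Cauchy–Schwarz bounds `E[|X - x| |h|]`.
-/

open MeasureTheory ProbabilityTheory
open scoped RealInnerProductSpace Gradient

theorem abs_le_mul_of_abs_le_of_abs_le_mul_add_sq {lam A B t : ℝ} (hA : 0 ≤ A) (hB : 0 ≤ B)
    (ht : 0 ≤ t) (hlamA : |lam| ≤ A) (hlamB : |lam| ≤ B * (t + t ^ 2)) :
    |lam| ≤ (A + 2 * B) * t := by
  rcases le_total t 1 with ht1 | ht1
  · nlinarith
  · nlinarith

noncomputable def projParamLip (δ L M : ℝ) : ℝ := δ ^ 2 / (M * L ^ 2) + 2 * ((2 * L + M) / δ ^ 2)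

noncomputable def projParamQuad (δ L M : ℝ) : ℝ := M / 2 * projParamLip δ L M ^ 2 + M / (2 * δ ^ 2)

section Gradient

variable {F : Type*} [NormedAddCommGroup F] [InnerProductSpace ℝ F]

theorem abs_inner_div_norm_sq_sub_le {u v : F} (hu : u ≠ 0) (hv : v ≠ 0) (h : F) :
    |⟪u, h⟫ / ‖u‖ ^ 2 - ⟪v, h⟫ / ‖v‖ ^ 2| ≤ ‖u - v‖ / (‖u‖ * ‖v‖) * ‖h‖ := by
  have hinv : ∀ z : F, ⟪z, h⟫ / ‖z‖ ^ 2 = ⟪(1 / ‖z‖) ^ 2 • z, h⟫ := fun z => by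
    rw [real_inner_smul_left]; ring
  rw [hinv, hinv, ← inner_sub_left]
  calc _ ≤ ‖(1 / ‖u‖) ^ 2 • u - (1 / ‖v‖) ^ 2 • v‖ * ‖h‖ := abs_real_inner_le_norm _ _
    _ = ‖u - v‖ / (‖u‖ * ‖v‖) * ‖h‖ := by
      rw [← dist_eq_norm, dist_div_norm_sq_smul hu hv, dist_eq_norm]; ring

theorem abs_inner_div_norm_sq_le (u v : F) : |⟪u, v⟫ / ‖u‖ ^ 2| ≤ ‖v‖ / ‖u‖ := by
  rw [abs_div, abs_sq, sq, ← div_div]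
  gcongr
  exact div_le_of_le_mul₀ (norm_nonneg _) (norm_nonneg _)
    ((abs_real_inner_le_norm u v).trans_eq (mul_comm _ _))

variable [CompleteSpace F]

theorem ContDiff.differentiable_gradient {I : F → ℝ} (hI : ContDiff ℝ 2 I) :
    Differentiable ℝ (∇ I) :=
  ((InnerProductSpace.toDual ℝ F).symm.contDiff.comp
    (hI.fderiv_right (m := 1) (by norm_num))).differentiable one_ne_zero

theorem abs_sub_sub_inner_gradient_le {I : F → ℝ} {M : ℝ} (hI : Differentiable ℝ I)
    (hlip : ∀ a b, ‖∇ I a - ∇ I b‖ ≤ M * ‖a - b‖) (a v : F) :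
    |I (a + v) - I a - ⟪∇ I a, v⟫| ≤ M / 2 * ‖v‖ ^ 2 := by
  let f : ℝ → ℝ := fun t => I (a + t • v) - I a - t * ⟪∇ I a, v⟫
  have hf : ∀ t, HasDerivAt f ⟪∇ I (a + t • v) - ∇ I a, v⟫ t := by
    intro t
    have hline : HasDerivAt (fun t : ℝ => a + t • v) v t := by
      simpa using ((hasDerivAt_id t).smul_const v).const_add a
    have := (((hI _).hasGradientAt.hasFDerivAt.comp_hasDerivAt t hline).sub_const (I a)).sub
      ((hasDerivAt_id t).mul_const ⟪∇ I a, v⟫)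
    refine this.congr_deriv ?_
    simp [inner_sub_left]
  have hB : ∀ t, HasDerivAt (fun t : ℝ => M / 2 * ‖v‖ ^ 2 * t ^ 2) (M * ‖v‖ ^ 2 * t) t := by
    intro t
    refine ((hasDerivAt_pow 2 t).const_mul (M / 2 * ‖v‖ ^ 2)).congr_deriv ?_
    ring
  have hbound : ∀ t ∈ Set.Ico (0 : ℝ) 1, ‖⟪∇ I (a + t • v) - ∇ I a, v⟫‖ ≤ M * ‖v‖ ^ 2 * t := by
    rintro t ⟨ht, -⟩
    calc ‖⟪∇ I (a + t • v) - ∇ I a, v⟫‖ ≤ ‖∇ I (a + t • v) - ∇ I a‖ * ‖v‖ := norm_inner_le_norm _ _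
      _ ≤ M * ‖t • v‖ * ‖v‖ := by
        gcongr
        simpa using hlip (a + t • v) a
      _ = M * ‖v‖ ^ 2 * t := by rw [norm_smul, Real.norm_of_nonneg ht]; ring
  have := image_norm_le_of_norm_deriv_right_le_deriv_boundary
    (fun t _ => (hf t).continuousAt.continuousWithinAt) (fun t _ => (hf t).hasDerivWithinAt)
    (by simp [f]) hB hbound (Set.right_mem_Icc.2 zero_le_one)
  simpa [f] using this

theorem abs_mul_norm_sq_sub_inner_le {I : F → ℝ} {M : ℝ} (hI : Differentiable ℝ I)
    (hlip : ∀ a b, ‖∇ I a - ∇ I b‖ ≤ M * ‖a - b‖) {a w : F} {lam : ℝ}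
    (hproj : I (a + lam • ∇ I a) = I w) :
    |lam * ‖∇ I a‖ ^ 2 - ⟪∇ I a, w - a⟫| ≤ M / 2 * (lam ^ 2 * ‖∇ I a‖ ^ 2 + ‖w - a‖ ^ 2) := by
  have hstep := abs_sub_sub_inner_gradient_le hI hlip a (lam • ∇ I a)
  have hdiff := abs_sub_sub_inner_gradient_le hI hlip a (w - a)
  rw [real_inner_smul_right, real_inner_self_eq_norm_sq, norm_smul, mul_pow, Real.norm_eq_abs,
    sq_abs, hproj] at hstep
  rw [add_sub_cancel] at hdiff
  calc |lam * ‖∇ I a‖ ^ 2 - ⟪∇ I a, w - a⟫|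
      = |(I w - I a - ⟪∇ I a, w - a⟫) - (I w - I a - lam * ‖∇ I a‖ ^ 2)| := by ring_nf
    _ ≤ |I w - I a - ⟪∇ I a, w - a⟫| + |I w - I a - lam * ‖∇ I a‖ ^ 2| := abs_sub _ _
    _ ≤ M / 2 * (lam ^ 2 * ‖∇ I a‖ ^ 2 + ‖w - a‖ ^ 2) := by linarith

theorem abs_sub_inner_div_norm_sq_le {I : F → ℝ} {δ L M : ℝ} (hδ : 0 < δ) (hM : 0 ≤ M)
    (hI : Differentiable ℝ I) (hlip : ∀ a b, ‖∇ I a - ∇ I b‖ ≤ M * ‖a - b‖) {a w : F} {lam : ℝ}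
    (hlow : δ ≤ ‖∇ I a‖) (hup : ‖∇ I a‖ ≤ L) (hproj : I (a + lam • ∇ I a) = I w)
    (hlam : |lam| ≤ δ ^ 2 / (M * L ^ 2)) :
    |lam - ⟪∇ I a, w - a⟫ / ‖∇ I a‖ ^ 2| ≤ projParamQuad δ L M * ‖w - a‖ ^ 2 := by
  have hdefect := abs_mul_norm_sq_sub_inner_le hI hlip hproj
  set u := ∇ I a
  set h := w - a
  have hL : 0 ≤ L := hδ.le.trans (hlow.trans hup)
  have hu_low : δ ^ 2 ≤ ‖u‖ ^ 2 := by gcongr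
  have hu_up : ‖u‖ ^ 2 ≤ L ^ 2 := by gcongr
  have hu_ne : ‖u‖ ≠ 0 := (hδ.trans_le hlow).ne'
  have hu_pos : 0 < ‖u‖ ^ 2 := by positivity
  have hinner : |⟪u, h⟫| ≤ L * ‖h‖ :=
    (abs_real_inner_le_norm u h).trans (by gcongr)
  -- The a priori bound on `lam` absorbs the quadratic term in `lam`; this is where the
  -- factor `1/2` of the Taylor bound is needed.
  have habsorb : M * (lam ^ 2 * ‖u‖ ^ 2) ≤ |lam| * δ ^ 2 := by
    have hcap : |lam| * (M * L ^ 2) ≤ δ ^ 2 :=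
      mul_le_of_le_div₀ (by positivity) (by positivity) hlam
    calc M * (lam ^ 2 * ‖u‖ ^ 2) = |lam| * (|lam| * (M * ‖u‖ ^ 2)) := by rw [← sq_abs]; ring
      _ ≤ |lam| * (|lam| * (M * L ^ 2)) := by gcongr
      _ ≤ |lam| * δ ^ 2 := by gcongr
  have hlin : |lam| * δ ^ 2 ≤ 2 * L * ‖h‖ + M * ‖h‖ ^ 2 := by
    have : |lam| * ‖u‖ ^ 2 ≤ |lam * ‖u‖ ^ 2 - ⟪u, h⟫| + |⟪u, h⟫| := by
      rw [← abs_of_pos hu_pos, ← abs_mul, abs_of_pos hu_pos]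
      linarith [abs_sub_abs_le_abs_sub (lam * ‖u‖ ^ 2) ⟪u, h⟫]
    nlinarith [mul_le_mul_of_nonneg_left hu_low (abs_nonneg lam)]
  have hlam_lip : |lam| ≤ projParamLip δ L M * ‖h‖ := by
    refine abs_le_mul_of_abs_le_of_abs_le_mul_add_sq (by positivity) (by positivity)
      (norm_nonneg h) hlam ?_
    rw [div_mul_eq_mul_div, le_div_iff₀ (by positivity)]
    nlinarith [norm_nonneg h, sq_nonneg ‖h‖]
  have hlam_sq : lam ^ 2 ≤ projParamLip δ L M ^ 2 * ‖h‖ ^ 2 := by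
    rw [← sq_abs, ← mul_pow]
    exact pow_le_pow_left₀ (abs_nonneg lam) hlam_lip 2
  calc |lam - ⟪u, h⟫ / ‖u‖ ^ 2| = |lam * ‖u‖ ^ 2 - ⟪u, h⟫| / ‖u‖ ^ 2 := by
        rw [← abs_of_pos hu_pos, ← abs_div, abs_of_pos hu_pos, sub_div,
          mul_div_cancel_right₀ _ hu_pos.ne']
    _ ≤ M / 2 * (lam ^ 2 * ‖u‖ ^ 2 + ‖h‖ ^ 2) / ‖u‖ ^ 2 := by gcongr
    _ = M / 2 * lam ^ 2 + M / 2 * ‖h‖ ^ 2 / ‖u‖ ^ 2 := by field_simp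
    _ ≤ M / 2 * (projParamLip δ L M ^ 2 * ‖h‖ ^ 2) + M / 2 * ‖h‖ ^ 2 / δ ^ 2 := by gcongr
    _ = projParamQuad δ L M * ‖h‖ ^ 2 := by unfold projParamQuad; field_simp

theorem abs_sub_inner_gradient_div_le {I : F → ℝ} {δ L M : ℝ} (hδ : 0 < δ) (hM : 0 ≤ M)
    (hI : Differentiable ℝ I) (hlip : ∀ a b, ‖∇ I a - ∇ I b‖ ≤ M * ‖a - b‖)
    (hlow : ∀ z, δ ≤ ‖∇ I z‖) (hup : ∀ z, ‖∇ I z‖ ≤ L) {x a w : F} {lam : ℝ}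
    (hw : I w = I x) (hproj : I (a + lam • ∇ I a) = I x) (hlam : |lam| ≤ δ ^ 2 / (M * L ^ 2)) :
    |lam - ⟪∇ I x, w - a⟫ / ‖∇ I x‖ ^ 2| ≤
      (projParamQuad δ L M + M / δ ^ 2) * ‖a - w‖ ^ 2 + M / δ ^ 2 * (‖w - x‖ * ‖a - w‖) := by
  have hne : ∀ z, ∇ I z ≠ 0 := fun z => norm_pos_iff.1 (hδ.trans_le (hlow z))
  have hquad := abs_sub_inner_div_norm_sq_le hδ hM hI hlip (hlow a) (hup a) (hproj.trans hw.symm)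
    hlam
  have hswap : |⟪∇ I a, w - a⟫ / ‖∇ I a‖ ^ 2 - ⟪∇ I x, w - a⟫ / ‖∇ I x‖ ^ 2| ≤
      M / δ ^ 2 * (‖a - x‖ * ‖a - w‖) := by
    have hfactor : ‖∇ I a - ∇ I x‖ / (‖∇ I a‖ * ‖∇ I x‖) ≤ M * ‖a - x‖ / (δ * δ) :=
      div_le_div₀ (by positivity) (hlip a x) (by positivity)
        (mul_le_mul (hlow a) (hlow x) hδ.le (norm_nonneg _))
    calc _ ≤ ‖∇ I a - ∇ I x‖ / (‖∇ I a‖ * ‖∇ I x‖) * ‖w - a‖ :=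
          abs_inner_div_norm_sq_sub_le (hne a) (hne x) _
      _ ≤ M * ‖a - x‖ / (δ * δ) * ‖a - w‖ := by rw [norm_sub_rev w a]; gcongr
      _ = M / δ ^ 2 * (‖a - x‖ * ‖a - w‖) := by ring
  have hax : ‖a - x‖ ≤ ‖a - w‖ + ‖w - x‖ := norm_sub_le_norm_sub_add_norm_sub a w x
  rw [norm_sub_rev w a] at hquad
  calc _ ≤ |lam - ⟪∇ I a, w - a⟫ / ‖∇ I a‖ ^ 2| +
        |⟪∇ I a, w - a⟫ / ‖∇ I a‖ ^ 2 - ⟪∇ I x, w - a⟫ / ‖∇ I x‖ ^ 2| := abs_sub_le _ _ _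
    _ ≤ projParamQuad δ L M * ‖a - w‖ ^ 2 + M / δ ^ 2 * ((‖a - w‖ + ‖w - x‖) * ‖a - w‖) :=
      add_le_add hquad (hswap.trans (by gcongr))
    _ = _ := by ring

end Gradient

theorem integral_norm_mul_norm_le_sqrt_mul_sqrt {Ω E : Type*} [MeasurableSpace Ω]
    {μ : Measure Ω} [NormedAddCommGroup E] {f g : Ω → E} (hf : MemLp f 2 μ) (hg : MemLp g 2 μ) :
    ∫ ω, ‖f ω‖ * ‖g ω‖ ∂μ ≤ √(∫ ω, ‖f ω‖ ^ 2 ∂μ) * √(∫ ω, ‖g ω‖ ^ 2 ∂μ) := by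
  have := integral_mul_norm_le_Lp_mul_Lq (μ := μ) Real.HolderConjugate.two_two
    (by simpa using hf) (by simpa using hg)
  simpa [Real.sqrt_eq_rpow] using this

theorem abs_integral_sub_inner_div_le {Ω F : Type*} [MeasurableSpace Ω] {μ : Measure Ω}
    [IsFiniteMeasure μ] [NormedAddCommGroup F] [InnerProductSpace ℝ F] [CompleteSpace F]
    {I : F → ℝ} {δ L M : ℝ} (hδ : 0 < δ) (hM : 0 ≤ M) (hI : Differentiable ℝ I)
    (hlip : ∀ a b, ‖∇ I a - ∇ I b‖ ≤ M * ‖a - b‖)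
    (hlow : ∀ z, δ ≤ ‖∇ I z‖) (hup : ∀ z, ‖∇ I z‖ ≤ L) {x : F} {X Xhat : Ω → F}
    (hX : MemLp X 2 μ) (hXhat : MemLp Xhat 2 μ) (hIX : ∀ᵐ ω ∂μ, I (X ω) = I x) {lam : Ω → ℝ}
    (hproj : ∀ᵐ ω ∂μ, I (Xhat ω + lam ω • ∇ I (Xhat ω)) = I x)
    (hlam : ∀ᵐ ω ∂μ, |lam ω| ≤ δ ^ 2 / (M * L ^ 2)) :
    |∫ ω, (lam ω - ⟪∇ I x, X ω - Xhat ω⟫ / ‖∇ I x‖ ^ 2) ∂μ| ≤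
      (projParamQuad δ L M + M / δ ^ 2) * ∫ ω, ‖Xhat ω - X ω‖ ^ 2 ∂μ +
        M / δ ^ 2 * ∫ ω, ‖X ω - x‖ * ‖Xhat ω - X ω‖ ∂μ := by
  have hdiff : MemLp (fun ω => Xhat ω - X ω) 2 μ := hXhat.sub hX
  have hsq_int : Integrable (fun ω => ‖Xhat ω - X ω‖ ^ 2) μ := hdiff.norm.integrable_sq
  have hprod_int : Integrable (fun ω => ‖X ω - x‖ * ‖Xhat ω - X ω‖) μ :=
    (hX.sub (memLp_const x)).norm.integrable_mul hdiff.norm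
  rw [← integral_const_mul, ← integral_const_mul, ← integral_add (hsq_int.const_mul _)
    (hprod_int.const_mul _), ← Real.norm_eq_abs]
  refine norm_integral_le_of_norm_le ((hsq_int.const_mul _).add (hprod_int.const_mul _)) ?_
  filter_upwards [hIX, hproj, hlam] with ω hIXω hprojω hlamω
  rw [Real.norm_eq_abs]
  exact abs_sub_inner_gradient_div_le hδ hM hI hlip hlow hup hIXω hprojω hlamω

theorem abs_integral_le_of_ae_projection {Ω F : Type*} [MeasurableSpace Ω] {μ : Measure Ω}
    [IsFiniteMeasure μ] [NormedAddCommGroup F] [InnerProductSpace ℝ F] [CompleteSpace F]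
    {I : F → ℝ} {δ L M : ℝ} (hδ : 0 < δ) (hM : 0 ≤ M) (hI : Differentiable ℝ I)
    (hlip : ∀ a b, ‖∇ I a - ∇ I b‖ ≤ M * ‖a - b‖)
    (hlow : ∀ z, δ ≤ ‖∇ I z‖) (hup : ∀ z, ‖∇ I z‖ ≤ L) {x : F} {X Xhat : Ω → F}
    (hX : MemLp X 2 μ) (hXhat : MemLp Xhat 2 μ) (hIX : ∀ᵐ ω ∂μ, I (X ω) = I x)
    {lam : Ω → ℝ} (hlam_meas : AEStronglyMeasurable lam μ)
    (hproj : ∀ᵐ ω ∂μ, I (Xhat ω + lam ω • ∇ I (Xhat ω)) = I x)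
    (hlam : ∀ᵐ ω ∂μ, |lam ω| ≤ δ ^ 2 / (M * L ^ 2)) :
    |∫ ω, lam ω ∂μ| ≤ (1 / δ + (projParamQuad δ L M + M / δ ^ 2)) *
      (‖∫ ω, (Xhat ω - X ω) ∂μ‖ + ∫ ω, ‖Xhat ω - X ω‖ ^ 2 ∂μ +
        √(∫ ω, ‖X ω - x‖ ^ 2 ∂μ) * √(∫ ω, ‖Xhat ω - X ω‖ ^ 2 ∂μ)) := by
  set u := ∇ I x
  set K := projParamQuad δ L M + M / δ ^ 2
  set T₁ := ‖∫ ω, (Xhat ω - X ω) ∂μ‖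
  set T₂ := ∫ ω, ‖Xhat ω - X ω‖ ^ 2 ∂μ
  set T₃ := √(∫ ω, ‖X ω - x‖ ^ 2 ∂μ) * √(∫ ω, ‖Xhat ω - X ω‖ ^ 2 ∂μ)
  have hX_int : Integrable X μ := hX.integrable one_le_two
  have hXhat_int : Integrable Xhat μ := hXhat.integrable one_le_two
  have hsub_int : Integrable (fun ω => X ω - Xhat ω) μ := hX_int.sub hXhat_int
  have hlin_int : Integrable (fun ω => ⟪u, X ω - Xhat ω⟫ / ‖u‖ ^ 2) μ :=
    (hsub_int.const_inner u).div_const _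
  have hremainder := abs_integral_sub_inner_div_le hδ hM hI hlip hlow hup hX hXhat hIX hproj hlam
  have hlinear : |∫ ω, ⟪u, X ω - Xhat ω⟫ / ‖u‖ ^ 2 ∂μ| ≤ T₁ / δ := by
    rw [integral_div, integral_inner hsub_int, integral_sub hX_int hXhat_int]
    refine (abs_inner_div_norm_sq_le _ _).trans ?_
    rw [norm_sub_rev, ← integral_sub hXhat_int hX_int]
    gcongr
    exact hlow x
  have hCS := integral_norm_mul_norm_le_sqrt_mul_sqrt (f := fun ω => X ω - x)
    (g := fun ω => Xhat ω - X ω) (hX.sub (memLp_const x)) (hXhat.sub hX)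
  have hK : 0 ≤ K := by unfold K projParamQuad; positivity
  have hT₁ : 0 ≤ T₁ := norm_nonneg _
  have hT₂ : 0 ≤ T₂ := integral_nonneg fun ω => by positivity
  have hT₃ : 0 ≤ T₃ := by positivity
  calc |∫ ω, lam ω ∂μ|
      = |∫ ω, (lam ω - ⟪u, X ω - Xhat ω⟫ / ‖u‖ ^ 2) ∂μ + ∫ ω, ⟪u, X ω - Xhat ω⟫ / ‖u‖ ^ 2 ∂μ| := by
        rw [integral_sub (.of_bound hlam_meas _ hlam) hlin_int, sub_add_cancel]
    _ ≤ K * T₂ + M / δ ^ 2 * T₃ + T₁ / δ := by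
        refine (abs_add_le _ _).trans (add_le_add (hremainder.trans ?_) hlinear)
        gcongr
    _ ≤ K * T₂ + K * T₃ + T₁ / δ := by
        have hMK : M / δ ^ 2 ≤ K := le_add_of_nonneg_left (by unfold projParamQuad; positivity)
        gcongr
    _ ≤ (1 / δ + K) * (T₁ + T₂ + T₃) := by
        have hslack : 0 ≤ 1 / δ * (T₂ + T₃) + K * T₁ := by positivity
        linarith [show (1 / δ + K) * (T₁ + T₂ + T₃) =
          K * T₂ + K * T₃ + T₁ / δ + (1 / δ * (T₂ + T₃) + K * T₁) by ring]

theorem lambda_mean_bound_general (δ L M : ℝ) (hδ : 0 < δ) :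
    ∃ C : ℝ, ∀ (Ω : Type) (_ : MeasureSpace Ω),
      IsProbabilityMeasure (ℙ : Measure Ω) →
      ∀ (d : ℕ) (x : EuclideanSpace ℝ (Fin d))
        (X Xhat : Ω → EuclideanSpace ℝ (Fin d)),
        MemLp X 2 ℙ → MemLp Xhat 2 ℙ →
        ∀ I : EuclideanSpace ℝ (Fin d) → ℝ, ContDiff ℝ 2 I →
        (∀ z : EuclideanSpace ℝ (Fin d), δ ≤ ‖gradient I z‖) →
        (∀ z : EuclideanSpace ℝ (Fin d), ‖gradient I z‖ ≤ L) →
        (∀ z : EuclideanSpace ℝ (Fin d), ‖fderiv ℝ (fun w => gradient I w) z‖ ≤ M) →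
        (∀ᵐ ω ∂(ℙ : Measure Ω), I (X ω) = I x) →
        ∀ lam : Ω → ℝ, Measurable lam →
        (∀ᵐ ω ∂(ℙ : Measure Ω), I (Xhat ω + lam ω • gradient I (Xhat ω)) = I x) →
        (∀ᵐ ω ∂(ℙ : Measure Ω), |lam ω| ≤ δ ^ 2 / (M * L ^ 2)) →
        |∫ ω, lam ω ∂(ℙ : Measure Ω)| ≤
          C * (‖∫ ω, (Xhat ω - X ω) ∂(ℙ : Measure Ω)‖ + ∫ ω, ‖Xhat ω - X ω‖ ^ 2 ∂(ℙ : Measure Ω) +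
            Real.sqrt (∫ ω, ‖X ω - x‖ ^ 2 ∂(ℙ : Measure Ω)) *
              Real.sqrt (∫ ω, ‖Xhat ω - X ω‖ ^ 2 ∂(ℙ : Measure Ω))) := by
  refine ⟨1 / δ + (projParamQuad δ L M + M / δ ^ 2), ?_⟩
  intro Ω _ _ d x X Xhat hX hXhat I hI hlow hup hhess hIX lam hlam_meas hproj hlam
  have hM : 0 ≤ M := (norm_nonneg _).trans (hhess 0)
  have hlip : ∀ a b, ‖∇ I a - ∇ I b‖ ≤ M * ‖a - b‖ := fun a b =>
    convex_univ.norm_image_sub_le_of_norm_fderiv_le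
      (fun z _ => hI.differentiable_gradient z) (fun z _ => hhess z) trivial trivial
  exact abs_integral_le_of_ae_projection hδ hM (hI.differentiable two_ne_zero) hlip hlow hup
    hX hXhat hIX hlam_meas.aestronglyMeasurable hproj hlam

/-- There is a constant `C = C(δ, L, M)` bounding the mean projection parameter:
`|E[λ]| ≤ C(|E[X̂ − X]| + E[|X̂ − X|²] + (E[|X − x|²])^{1/2}(E[|X̂ − X|²])^{1/2})`. -/
theorem lambda_mean_bound (δ L M : ℝ) (hδ : 0 < δ) (hL : 0 < L) (hM : 0 < M) :
    ∃ C : ℝ, ∀ (Ω : Type) (_ : MeasureSpace Ω),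
      IsProbabilityMeasure (ℙ : Measure Ω) →
      ∀ (d : ℕ) (x : EuclideanSpace ℝ (Fin d))
        (X Xhat : Ω → EuclideanSpace ℝ (Fin d)),
        MemLp X 2 ℙ → MemLp Xhat 2 ℙ →
        ∀ I : EuclideanSpace ℝ (Fin d) → ℝ, ContDiff ℝ 2 I →
        (∀ z : EuclideanSpace ℝ (Fin d), δ ≤ ‖gradient I z‖) →
        (∀ z : EuclideanSpace ℝ (Fin d), ‖gradient I z‖ ≤ L) →
        (∀ z : EuclideanSpace ℝ (Fin d), ‖fderiv ℝ (fun w => gradient I w) z‖ ≤ M) →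
        (∀ᵐ ω ∂(ℙ : Measure Ω), I (X ω) = I x) →
        ∀ lam : Ω → ℝ, Measurable lam →
        (∀ᵐ ω ∂(ℙ : Measure Ω), I (Xhat ω + lam ω • gradient I (Xhat ω)) = I x) →
        (∀ᵐ ω ∂(ℙ : Measure Ω), |lam ω| ≤ δ ^ 2 / (M * L ^ 2)) →
        |∫ ω, lam ω ∂(ℙ : Measure Ω)| ≤
          C * (‖∫ ω, (Xhat ω - X ω) ∂(ℙ : Measure Ω)‖ + ∫ ω, ‖Xhat ω - X ω‖ ^ 2 ∂(ℙ : Measure Ω) +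
            Real.sqrt (∫ ω, ‖X ω - x‖ ^ 2 ∂(ℙ : Measure Ω)) *
              Real.sqrt (∫ ω, ‖Xhat ω - X ω‖ ^ 2 ∂(ℙ : Measure Ω))) :=
  lambda_mean_bound_general δ L M hδ
end
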